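/- arXiv:1107.5500 — 2 statements merged into one kernel-verified Lean document; each statement's English description precedes it below -/
import Mathlib

section
/- Fix $a \ge 0$. The function $f \colon \mathbb{R}^4 \to \mathbb{R}$ given by $f(x_2, y_2, x_3, y_3) = (x_3^2 + y_3^2)(12 + a + x_2^2 + y_2^2)$ is convex on the open set $\{(x_2,y_2,x_3,y_3) : x_2^2 + y_2^2 < 4\}$. -/
/-!
Writing `z₂ = x₂ + i y₂`, `z₃ = x₃ + i y₃`, the function is `‖z₃‖² / φ z₂` with
`φ z = (12 + a + ‖z‖²)⁻¹`. The quadratic-over-linear function `(w, t) ↦ ‖w‖² / t` is jointly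
convex for `t > 0` and decreasing in `t`, so precomposing its second argument with a positive
concave function keeps it convex. Finally `(c + ‖z‖²)⁻¹` is concave on the ball `3 ‖z‖² ≤ c`,
which contains the disc `|z₂| < 2` as soon as `c ≥ 12`.
-/

open Set Metric
open scoped RealInnerProductSpace

theorem sq_add_div_le_of_convex_comb {u v t s a b : ℝ} (ht : 0 < t) (hs : 0 < s)
    (ha : 0 ≤ a) (hb : 0 ≤ b) (hab : a + b = 1) :
    (a * u + b * v) ^ 2 / (a * t + b * s) ≤ a * (u ^ 2 / t) + b * (v ^ 2 / s) := by
  have hts : 0 < a * t + b * s := convex_Ioi (0 : ℝ) ht hs ha hb hab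
  rw [div_le_iff₀ hts]
  have key : (a * (u ^ 2 / t) + b * (v ^ 2 / s)) * (a * t + b * s) - (a * u + b * v) ^ 2
      = a * b * (u * s - v * t) ^ 2 / (t * s) := by
    obtain rfl : b = 1 - a := by linarith
    field_simp
    ring
  have : 0 ≤ a * b * (u * s - v * t) ^ 2 / (t * s) := by positivity
  linarith

theorem convexOn_univ_prod_Ioi_norm_sq_div {F : Type*} [SeminormedAddCommGroup F]
    [NormedSpace ℝ F] :
    ConvexOn ℝ (univ ×ˢ Ioi 0) (fun p : F × ℝ => ‖p.1‖ ^ 2 / p.2) := by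
  refine ⟨convex_univ.prod (convex_Ioi 0), ?_⟩
  rintro ⟨w, t⟩ ⟨-, ht : 0 < t⟩ ⟨w', t'⟩ ⟨-, ht' : 0 < t'⟩ a b ha hb hab
  have hnorm : ‖a • w + b • w'‖ ≤ a * ‖w‖ + b * ‖w'‖ := by
    simpa [norm_smul, abs_of_nonneg ha, abs_of_nonneg hb] using norm_add_le (a • w) (b • w')
  calc ‖a • w + b • w'‖ ^ 2 / (a * t + b * t')
      ≤ (a * ‖w‖ + b * ‖w'‖) ^ 2 / (a * t + b * t') := by gcongr
    _ ≤ a * (‖w‖ ^ 2 / t) + b * (‖w'‖ ^ 2 / t') := sq_add_div_le_of_convex_comb ht ht' ha hb hab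

section InnerProduct

variable {E : Type*} [NormedAddCommGroup E] [InnerProductSpace ℝ E]

theorem norm_sq_smul_add_smul {a b : ℝ} (hab : a + b = 1) (z z' : E) :
    ‖a • z + b • z'‖ ^ 2 = a * ‖z‖ ^ 2 + b * ‖z'‖ ^ 2 - a * b * ‖z - z'‖ ^ 2 := by
  obtain rfl : b = 1 - a := by linarith
  rw [norm_add_sq_real, norm_sub_sq_real, norm_smul, norm_smul, real_inner_smul_left,
    real_inner_smul_right, Real.norm_eq_abs, Real.norm_eq_abs, mul_pow, mul_pow, sq_abs, sq_abs]
  ring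

theorem sq_norm_sq_sub_norm_sq_le (z z' : E) :
    (‖z‖ ^ 2 - ‖z'‖ ^ 2) ^ 2 ≤ ‖z - z'‖ ^ 2 * (2 * ‖z‖ ^ 2 + 2 * ‖z'‖ ^ 2) := by
  have hdiff : ‖z‖ ^ 2 - ‖z'‖ ^ 2 = ⟪z - z', z + z'⟫ := by
    rw [inner_sub_left, inner_add_right, inner_add_right, real_inner_self_eq_norm_sq,
      real_inner_self_eq_norm_sq, real_inner_comm z z']
    ring
  calc (‖z‖ ^ 2 - ‖z'‖ ^ 2) ^ 2 ≤ (‖z - z'‖ * ‖z + z'‖) ^ 2 := by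
        rw [hdiff, ← sq_abs]
        gcongr
        exact abs_real_inner_le_norm _ _
    _ ≤ ‖z - z'‖ ^ 2 * (2 * ‖z‖ ^ 2 + 2 * ‖z'‖ ^ 2) := by
        rw [mul_pow]
        gcongr
        linarith [norm_add_sq_real z z', norm_sub_sq_real z z', sq_nonneg ‖z - z'‖]

theorem concaveOn_inv_const_add_norm_sq {c r : ℝ} (hc : 0 < c) (hrc : 3 * r ^ 2 ≤ c) :
    ConcaveOn ℝ (closedBall (0 : E) r) (fun z => (c + ‖z‖ ^ 2)⁻¹) := by
  refine ⟨convex_closedBall 0 r, ?_⟩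
  intro z hz z' hz' a b ha hb hab
  have hp : 3 * ‖z‖ ^ 2 ≤ c := by
    have : ‖z‖ ≤ r := by simpa using hz
    nlinarith [norm_nonneg z]
  have hq : 3 * ‖z'‖ ^ 2 ≤ c := by
    have : ‖z'‖ ≤ r := by simpa using hz'
    nlinarith [norm_nonneg z']
  set p := ‖z‖ ^ 2
  set q := ‖z'‖ ^ 2
  set d := ‖z - z'‖ ^ 2
  have hm : ‖a • z + b • z'‖ ^ 2 = a * p + b * q - a * b * d := norm_sq_smul_add_smul hab z z'
  have hzpos : 0 < c + p := by positivity
  have hz'pos : 0 < c + q := by positivity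
  have hmpos : 0 < c + ‖a • z + b • z'‖ ^ 2 := by positivity
  have hsq : (p - q) ^ 2 ≤ d * (c + a * q + b * p) := by
    calc (p - q) ^ 2 ≤ d * (2 * p + 2 * q) := sq_norm_sq_sub_norm_sq_le z z'
      _ ≤ d * (c + a * q + b * p) := by
        have hd : 0 ≤ d := sq_nonneg _
        refine mul_le_mul_of_nonneg_left ?_ hd
        obtain rfl : a = 1 - b := by linarith
        nlinarith [mul_le_mul_of_nonneg_left hp ha, mul_le_mul_of_nonneg_left hq hb]
  -- `(c + p)(c + q) - (a(c + q) + b(c + p))(c + ‖a z + b z'‖²) = a b (d (c + a q + b p) - (p - q)²)`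
  have key : (a * (c + q) + b * (c + p)) * (c + ‖a • z + b • z'‖ ^ 2) ≤ (c + p) * (c + q) := by
    obtain rfl : b = 1 - a := by linarith
    rw [hm]
    nlinarith [mul_le_mul_of_nonneg_left hsq (mul_nonneg ha hb)]
  simp only [smul_eq_mul, ← div_eq_mul_inv]
  rw [div_add_div _ _ hzpos.ne' hz'pos.ne', ← one_div, div_le_div_iff₀ (by positivity) hmpos]
  linarith

end InnerProduct

theorem ConcaveOn.convexOn_norm_sq_div {E F : Type*} [AddCommGroup E] [Module ℝ E]
    [SeminormedAddCommGroup F] [NormedSpace ℝ F] {s : Set E} {φ : E → ℝ}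
    (hφ : ConcaveOn ℝ s φ) (hφ_pos : ∀ z ∈ s, 0 < φ z) :
    ConvexOn ℝ (s ×ˢ univ) (fun p : E × F => ‖p.2‖ ^ 2 / φ p.1) := by
  refine ⟨hφ.1.prod convex_univ, ?_⟩
  rintro ⟨z, w⟩ ⟨hz, -⟩ ⟨z', w'⟩ ⟨hz', -⟩ a b ha hb hab
  have hφ_mid : a * φ z + b * φ z' ≤ φ (a • z + b • z') := hφ.2 hz hz' ha hb hab
  have hcomb : 0 < a * φ z + b * φ z' :=
    convex_Ioi (0 : ℝ) (hφ_pos z hz) (hφ_pos z' hz') ha hb hab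
  calc ‖a • w + b • w'‖ ^ 2 / φ (a • z + b • z')
      ≤ ‖a • w + b • w'‖ ^ 2 / (a * φ z + b * φ z') := by gcongr
    _ ≤ a * (‖w‖ ^ 2 / φ z) + b * (‖w'‖ ^ 2 / φ z') :=
        convexOn_univ_prod_Ioi_norm_sq_div.2 (x := (w, φ z)) (y := (w', φ z'))
          ⟨trivial, hφ_pos z hz⟩ ⟨trivial, hφ_pos z' hz'⟩ ha hb hab

theorem Complex.sq_norm_mk (x y : ℝ) : ‖(⟨x, y⟩ : ℂ)‖ ^ 2 = x ^ 2 + y ^ 2 := by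
  rw [Complex.sq_norm, Complex.normSq_mk, sq, sq]

def complexCoords : ℝ × ℝ × ℝ × ℝ →ₗ[ℝ] ℂ × ℂ where
  toFun x := (⟨x.1, x.2.1⟩, ⟨x.2.2.1, x.2.2.2⟩)
  map_add' _ _ := rfl
  map_smul' _ _ := by ext <;> apply Complex.ext <;> simp

theorem preimage_complexCoords_ball_prod_univ {r : ℝ} (hr : 0 ≤ r) :
    complexCoords ⁻¹' (ball 0 r ×ˢ univ) = {x | x.1 ^ 2 + x.2.1 ^ 2 < r ^ 2} := by
  ext x
  simp only [mem_preimage, mem_prod, mem_ball_zero_iff, mem_univ, and_true, mem_ofPred_eq]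
  rw [← pow_lt_pow_iff_left₀ (norm_nonneg _) hr two_ne_zero]
  simp [complexCoords, Complex.sq_norm_mk]

/-- `(x₃² + y₃²)(12 + a + x₂² + y₂²)` is convex on `{x₂² + y₂² < 4}`. -/
theorem convexity_of_example_term (a : ℝ) (ha : 0 ≤ a) :
    ConvexOn ℝ {x : ℝ × ℝ × ℝ × ℝ | x.1 ^ 2 + x.2.1 ^ 2 < 4}
      (fun x : ℝ × ℝ × ℝ × ℝ =>
        (x.2.2.1 ^ 2 + x.2.2.2 ^ 2) * (12 + a + x.1 ^ 2 + x.2.1 ^ 2)) := by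
  have hconc : ConcaveOn ℝ (ball (0 : ℂ) 2) (fun z => (12 + a + ‖z‖ ^ 2)⁻¹) :=
    (concaveOn_inv_const_add_norm_sq (by positivity) (by linarith)).subset
      ball_subset_closedBall (convex_ball 0 2)
  have hpos : ∀ z ∈ ball (0 : ℂ) 2, 0 < (12 + a + ‖z‖ ^ 2)⁻¹ := fun z _ => by positivity
  have hF : ConvexOn ℝ (ball (0 : ℂ) 2 ×ˢ univ)
      (fun p : ℂ × ℂ => ‖p.2‖ ^ 2 / (12 + a + ‖p.1‖ ^ 2)⁻¹) :=
    hconc.convexOn_norm_sq_div hpos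
  have hset := preimage_complexCoords_ball_prod_univ zero_le_two
  have hfun : (fun p : ℂ × ℂ => ‖p.2‖ ^ 2 / (12 + a + ‖p.1‖ ^ 2)⁻¹) ∘ complexCoords =
      fun x => (x.2.2.1 ^ 2 + x.2.2.2 ^ 2) * (12 + a + x.1 ^ 2 + x.2.1 ^ 2) := by
    ext x
    simp [complexCoords, Complex.sq_norm_mk, add_assoc]
  norm_num at hset
  rw [← hset, ← hfun]
  exact hF.comp_linearMap complexCoords
end

section
/- Let $U \subseteq \mathbb{C}^n$ and $V \subseteq \mathbb{C}^m$ be bounded domains. The set of strongly regular points of $\partial(U \times V)$ is closed (in $\partial(U \times V)$) if and only if the set of strongly regular points of $\partial U$ is closed in $\partial U$ and the set of strongly regular points of $\partial V$ is closed in $\partial V$. -/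
open Set Metric MeasureTheory Complex

def SubharmonicOn (u : ℂ → ℝ) (s : Set ℂ) : Prop :=
  UpperSemicontinuousOn u s ∧ ∀ c : ℂ, ∀ r : ℝ, 0 < r → closedBall c r ⊆ s →
    u c ≤ (2 * Real.pi)⁻¹ * ∫ θ in (0:ℝ)..(2 * Real.pi),
      u (c + (r : ℂ) * Complex.exp (θ * Complex.I))

def PSHOn {E : Type*} [NormedAddCommGroup E] [NormedSpace ℂ E]
    (u : E → ℝ) (s : Set E) : Prop :=
  UpperSemicontinuousOn u s ∧
    ∀ a b : E, SubharmonicOn (fun t : ℂ => u (a + t • b)) {t : ℂ | a + t • b ∈ s}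

/-- A boundary point is strongly regular if it admits a continuous plurisubharmonic
peak function. -/
def StronglyRegular {E : Type*} [NormedAddCommGroup E] [NormedSpace ℂ E]
    (D : Set E) (x₀ : E) : Prop :=
  x₀ ∈ frontier D ∧ ∃ u : E → ℝ, ContinuousOn u (closure D) ∧ PSHOn u D ∧
    u x₀ = 0 ∧ ∀ x ∈ closure D \ {x₀}, u x < 0

/-!
If `w` peaks at `(p, q) ∈ ∂(U × V)`, then its slice `x ↦ w (x, q)` peaks at `p`: along complex
lines it is a limit of the subharmonic slices `x ↦ w (x, y)`, `y ∈ V`, and the sub-mean value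
inequality passes to the limit. A continuous plurisubharmonic function has no strict maximum at an
interior point, so `p ∉ U`, and `p` is strongly regular; symmetrically for `q`. Conversely
`u z.1 + v z.2` peaks at `(p, q)`. Hence the strongly regular points of `∂(U × V)` form the product
of those of `∂U` and `∂V`. Both factors are nonempty, since a point `x₀` of maximal norm in the
closure is peaked by `re ⟪x₀, x⟫ - ‖x₀‖²`, so the product is closed iff both factors are. When one
factor is `ℂ⁰` the domain is the whole point, and the product is a copy of the other factor.
-/

theorem subharmonicOn_iff_le_circleAverage {u : ℂ → ℝ} {s : Set ℂ} :
    SubharmonicOn u s ↔ UpperSemicontinuousOn u s ∧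
      ∀ c : ℂ, ∀ r : ℝ, 0 < r → closedBall c r ⊆ s → u c ≤ Real.circleAverage u c r :=
  Iff.rfl

namespace SubharmonicOn

variable {u v : ℂ → ℝ} {s t : Set ℂ}

theorem mono (hu : SubharmonicOn u s) (hts : t ⊆ s) : SubharmonicOn u t :=
  ⟨hu.1.mono hts, fun c r hr hball => hu.2 c r hr (hball.trans hts)⟩

theorem add (hu : SubharmonicOn u s) (hv : SubharmonicOn v s) (hcu : ContinuousOn u s)
    (hcv : ContinuousOn v s) : SubharmonicOn (fun z => u z + v z) s := by
  refine subharmonicOn_iff_le_circleAverage.2 ⟨hu.1.add hv.1, fun c r hr hball => ?_⟩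
  have hsphere : sphere c |r| ⊆ s := by
    rw [abs_of_pos hr]; exact sphere_subset_closedBall.trans hball
  rw [Real.circleAverage_fun_add ((hcu.mono hsphere).circleIntegrable')
    ((hcv.mono hsphere).circleIntegrable')]
  exact add_le_add (hu.2 c r hr hball) (hv.2 c r hr hball)

theorem exists_mem_sphere_le (hu : SubharmonicOn u s) (hcu : ContinuousOn u s) {c : ℂ} {r : ℝ}
    (hr : 0 < r) (hball : closedBall c r ⊆ s) : ∃ z ∈ sphere c r, u c ≤ u z := by
  have hsphere : ContinuousOn u (sphere c r) := hcu.mono (sphere_subset_closedBall.trans hball)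
  obtain ⟨z, hz, hmax⟩ :=
    (isCompact_sphere c r).exists_isMaxOn (NormedSpace.sphere_nonempty.2 hr.le) hsphere
  refine ⟨z, hz, (hu.2 c r hr hball).trans ?_⟩
  rw [← abs_of_pos hr] at hsphere hmax
  exact Real.circleAverage_mono_on_of_le_circle hsphere.circleIntegrable' fun y hy => hmax hy

end SubharmonicOn

theorem subharmonicOn_re_of_differentiable {h : ℂ → ℂ} (hh : Differentiable ℂ h) (s : Set ℂ) :
    SubharmonicOn (fun z => (h z).re) s := by
  refine subharmonicOn_iff_le_circleAverage.2
    ⟨(continuous_re.comp hh.continuous).continuousOn.upperSemicontinuousOn,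
      fun c r _ _ => le_of_eq ?_⟩
  have hre := reCLM.circleAverage_comp_comm
    (hh.continuous.continuousOn.circleIntegrable' (c := c) (R := r))
  simp only [Function.comp_def, reCLM_apply] at hre
  rw [hre, hh.diffContOnCl.circleAverage]

/-- The bound `M` lets dominated convergence carry the circle averages to the limit `y → y₀`. -/
theorem SubharmonicOn.of_mem_closure {Y : Type*} [TopologicalSpace Y] [FirstCountableTopology Y]
    {g : Y → ℂ → ℝ} {T : Set Y} {s : Set ℂ} {y₀ : Y} {M : ℝ} (hy₀ : y₀ ∈ closure T)
    (hg : ∀ y ∈ T, SubharmonicOn (g y) s)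
    (hcont : ContinuousOn (Function.uncurry g) (closure T ×ˢ s))
    (hM : ∀ y ∈ T, ∀ z ∈ s, |g y z| ≤ M) : SubharmonicOn (g y₀) s := by
  have hslice (z : ℂ) (hz : z ∈ s) : ContinuousWithinAt (fun y => g y z) T y₀ :=
    (hcont (y₀, z) ⟨hy₀, hz⟩).comp (f := fun y => (y, z)) (x := y₀)
      (continuous_id.prodMk continuous_const).continuousWithinAt
      fun y hy => ⟨subset_closure hy, hz⟩
  refine subharmonicOn_iff_le_circleAverage.2
    ⟨(hcont.comp (continuous_const.prodMk continuous_id).continuousOn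
      fun z hz => ⟨hy₀, hz⟩).upperSemicontinuousOn, fun c r hr hball => ?_⟩
  have hcircle : ∀ θ, circleMap c r θ ∈ s := fun θ => hball (circleMap_mem_closedBall c hr.le θ)
  have hmean : ContinuousWithinAt (fun y => Real.circleAverage (g y) c r) T y₀ := by
    refine (intervalIntegral.continuousWithinAt_of_dominated_interval (μ := volume)
      (bound := fun _ => M) ?_ ?_ intervalIntegrable_const
      (.of_forall fun θ _ => hslice _ (hcircle θ))).const_smul (2 * Real.pi)⁻¹
    · filter_upwards [self_mem_nhdsWithin] with y hy
      exact (hcont.comp_continuous (f := fun θ => (y, circleMap c r θ)) (by fun_prop)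
        fun θ => ⟨subset_closure hy, hcircle θ⟩).aestronglyMeasurable
    · filter_upwards [self_mem_nhdsWithin] with y hy
      exact .of_forall fun θ _ => hM y hy _ (hcircle θ)
  exact ContinuousWithinAt.closure_le hy₀ (hslice c (hball (mem_closedBall_self hr.le))) hmean
    fun y hy => (hg y hy).2 c r hr hball

namespace PSHOn

variable {E F : Type*} [NormedAddCommGroup E] [NormedSpace ℂ E]
  [NormedAddCommGroup F] [NormedSpace ℂ F] {u v : E → ℝ} {D D' : Set E}

theorem mono (hu : PSHOn u D) (hD : D' ⊆ D) : PSHOn u D' :=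
  ⟨hu.1.mono hD, fun a b => (hu.2 a b).mono fun _ ht => hD ht⟩

theorem add (hu : PSHOn u D) (hv : PSHOn v D) (hcu : ContinuousOn u D) (hcv : ContinuousOn v D) :
    PSHOn (fun x => u x + v x) D :=
  ⟨hu.1.add hv.1, fun a b => (hu.2 a b).add (hv.2 a b)
    (hcu.comp (by fun_prop) fun _ ht => ht) (hcv.comp (by fun_prop) fun _ ht => ht)⟩

theorem comp_continuousLinearMap (hu : PSHOn u D) (L : F →L[ℂ] E) : PSHOn (u ∘ L) (L ⁻¹' D) :=
  ⟨hu.1.comp L.continuous.continuousOn (mapsTo_preimage L D), fun a b => by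
    simpa only [Function.comp_apply, map_add, map_smul, mem_preimage] using hu.2 (L a) (L b)⟩

/-- Restrict `u` to a small disc in a complex line through `x`. -/
theorem exists_ne_le [Nontrivial E] (hu : PSHOn u D) (hcu : ContinuousOn u D) (hD : IsOpen D)
    {x : E} (hx : x ∈ D) : ∃ y ∈ D, y ≠ x ∧ u x ≤ u y := by
  obtain ⟨b, hb⟩ := exists_ne (0 : E)
  have hline : Continuous fun t : ℂ => x + t • b := by fun_prop
  obtain ⟨ε, hε, hball⟩ :=
    Metric.isOpen_iff.1 (hD.preimage hline) 0 (by simpa using hx)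
  have hdisc : closedBall (0 : ℂ) (ε / 2) ⊆ {t | x + t • b ∈ D} :=
    (closedBall_subset_ball (half_lt_self hε)).trans hball
  obtain ⟨z, hz, hle⟩ := (hu.2 x b).exists_mem_sphere_le (hcu.comp hline.continuousOn
    fun _ ht => ht) (half_pos hε) hdisc
  have hz0 : z ≠ 0 := ne_of_mem_sphere hz (half_pos hε).ne'
  exact ⟨x + z • b, hdisc (sphere_subset_closedBall hz), by simpa [hz0] using hb,
    by simpa using hle⟩

theorem slice_of_mem_closure {U : Set E} {V : Set F} {w : E × F → ℝ} (hw : PSHOn w (U ×ˢ V))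
    (hcw : ContinuousOn w (closure (U ×ˢ V))) (hUc : IsCompact (closure U))
    (hVc : IsCompact (closure V)) {q : F} (hq : q ∈ closure V) :
    PSHOn (fun x => w (x, q)) U := by
  rw [closure_prod_eq] at hcw
  obtain ⟨M, hM⟩ := (hUc.prod hVc).exists_bound_of_continuousOn hcw
  refine ⟨(hcw.comp (by fun_prop) fun x hx => ⟨subset_closure hx, hq⟩).upperSemicontinuousOn,
    fun a b => ?_⟩
  refine SubharmonicOn.of_mem_closure (g := fun y t => w (a + t • b, y)) hq
    (fun y hy => ?_) (hcw.comp (by fun_prop) fun z hz => ⟨subset_closure hz.2, hz.1⟩)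
    fun y hy z hz => hM _ ⟨subset_closure hz, subset_closure hy⟩
  simpa [hy] using hw.2 (a, y) (b, 0)

end PSHOn

section StronglyRegular

variable {E F : Type*} [NormedAddCommGroup E] [NormedSpace ℂ E]
  [NormedAddCommGroup F] [NormedSpace ℂ F]

structure IsPeakFunction (D : Set E) (u : E → ℝ) (x₀ : E) : Prop where
  continuousOn : ContinuousOn u (closure D)
  pshOn : PSHOn u D
  apply_eq_zero : u x₀ = 0
  apply_neg : ∀ x ∈ closure D \ {x₀}, u x < 0

theorem stronglyRegular_iff {D : Set E} {x₀ : E} :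
    StronglyRegular D x₀ ↔ x₀ ∈ frontier D ∧ ∃ u, IsPeakFunction D u x₀ :=
  ⟨fun ⟨hx₀, u, hc, hpsh, h0, hneg⟩ => ⟨hx₀, u, hc, hpsh, h0, hneg⟩,
    fun ⟨hx₀, u, hu⟩ => ⟨hx₀, u, hu.1, hu.2, hu.3, hu.4⟩⟩

namespace IsPeakFunction

variable {D : Set E} {u : E → ℝ} {x₀ : E}

theorem nonpos (hu : IsPeakFunction D u x₀) {x : E} (hx : x ∈ closure D) : u x ≤ 0 := by
  rcases eq_or_ne x x₀ with rfl | hne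
  · exact hu.apply_eq_zero.le
  · exact (hu.apply_neg x ⟨hx, hne⟩).le

theorem notMem_of_isOpen [Nontrivial E] (hu : IsPeakFunction D u x₀) (hD : IsOpen D) :
    x₀ ∉ D := fun hx => by
  obtain ⟨y, hy, hne, hle⟩ := hu.pshOn.exists_ne_le (hu.continuousOn.mono subset_closure) hD hx
  linarith [hu.apply_eq_zero, hu.apply_neg y ⟨subset_closure hy, hne⟩]

theorem stronglyRegular [Nontrivial E] (hu : IsPeakFunction D u x₀) (hD : IsOpen D)
    (hx₀ : x₀ ∈ closure D) : StronglyRegular D x₀ :=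
  stronglyRegular_iff.2 ⟨⟨hx₀, by rw [hD.interior_eq]; exact hu.notMem_of_isOpen hD⟩, u, hu⟩

theorem comp_continuousLinearEquiv (e : F ≃L[ℂ] E) {x : F} (hu : IsPeakFunction D u (e x)) :
    IsPeakFunction (e ⁻¹' D) (u ∘ e) x where
  continuousOn := by
    rw [← e.preimage_closure]
    exact hu.continuousOn.comp e.continuous.continuousOn (mapsTo_preimage _ _)
  pshOn := hu.pshOn.comp_continuousLinearMap (e : F →L[ℂ] E)
  apply_eq_zero := hu.apply_eq_zero
  apply_neg y hy := by
    rw [← e.preimage_closure] at hy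
    exact hu.apply_neg (e y) ⟨hy.1, fun h => hy.2 (e.injective h)⟩

theorem prod {U : Set E} {V : Set F} {u : E → ℝ} {v : F → ℝ} {p : E} {q : F}
    (hu : IsPeakFunction U u p) (hv : IsPeakFunction V v q) :
    IsPeakFunction (U ×ˢ V) (fun z => u z.1 + v z.2) (p, q) where
  continuousOn := by
    rw [closure_prod_eq]
    exact (hu.continuousOn.comp continuous_fst.continuousOn fun _ h => h.1).add
      (hv.continuousOn.comp continuous_snd.continuousOn fun _ h => h.2)
  pshOn :=
    ((hu.pshOn.comp_continuousLinearMap (.fst ℂ E F)).mono fun _ hz => hz.1).add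
      ((hv.pshOn.comp_continuousLinearMap (.snd ℂ E F)).mono fun _ hz => hz.2)
      (hu.continuousOn.comp (by fun_prop) fun _ hz => subset_closure hz.1)
      (hv.continuousOn.comp (by fun_prop) fun _ hz => subset_closure hz.2)
  apply_eq_zero := by simp [hu.apply_eq_zero, hv.apply_eq_zero]
  apply_neg := by
    rintro ⟨x, y⟩ ⟨hxy, hne⟩
    rw [closure_prod_eq] at hxy
    rcases eq_or_ne x p with rfl | hxp
    · have hyq : y ≠ q := fun h => hne (by rw [h]; rfl)
      linarith [hu.apply_eq_zero, hv.apply_neg y ⟨hxy.2, hyq⟩]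
    · linarith [hu.apply_neg x ⟨hxy.1, hxp⟩, hv.nonpos hxy.2]

theorem slice {U : Set E} {V : Set F} {w : E × F → ℝ} {p : E} {q : F}
    (hw : IsPeakFunction (U ×ˢ V) w (p, q)) (hUc : IsCompact (closure U))
    (hVc : IsCompact (closure V)) (hq : q ∈ closure V) :
    IsPeakFunction U (fun x => w (x, q)) p := by
  have hmem : ∀ x ∈ closure U, (x, q) ∈ closure (U ×ˢ V) := fun x hx => by
    rw [closure_prod_eq]; exact ⟨hx, hq⟩
  exact ⟨hw.continuousOn.comp (by fun_prop) hmem,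
    hw.pshOn.slice_of_mem_closure hw.continuousOn hUc hVc hq, hw.apply_eq_zero,
    fun x hx => hw.apply_neg _ ⟨hmem x hx.1, fun h => hx.2 (congrArg Prod.fst h)⟩⟩

end IsPeakFunction

theorem StronglyRegular.preimage_continuousLinearEquiv (e : F ≃L[ℂ] E) {D : Set E} {x : F}
    (h : StronglyRegular D (e x)) : StronglyRegular (e ⁻¹' D) x := by
  obtain ⟨hfr, u, hu⟩ := stronglyRegular_iff.1 h
  refine stronglyRegular_iff.2 ⟨?_, u ∘ e, hu.comp_continuousLinearEquiv e⟩
  rwa [← e.coe_toHomeomorph, ← Homeomorph.preimage_frontier]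

theorem stronglyRegular_preimage_continuousLinearEquiv_iff (e : F ≃L[ℂ] E) {D : Set E} {x : F} :
    StronglyRegular (e ⁻¹' D) x ↔ StronglyRegular D (e x) := by
  refine ⟨fun h => ?_, .preimage_continuousLinearEquiv e⟩
  rw [← e.symm_apply_apply x] at h
  simpa [e.preimage_symm_preimage] using h.preimage_continuousLinearEquiv e.symm

theorem not_stronglyRegular_univ (x : E) : ¬ StronglyRegular univ x := fun h => by
  simpa using h.1

theorem StronglyRegular.prod {U : Set E} {V : Set F} {p : E} {q : F} (hp : StronglyRegular U p)
    (hq : StronglyRegular V q) : StronglyRegular (U ×ˢ V) (p, q) := by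
  obtain ⟨hpf, u, hu⟩ := stronglyRegular_iff.1 hp
  obtain ⟨hqf, v, hv⟩ := stronglyRegular_iff.1 hq
  refine stronglyRegular_iff.2 ⟨?_, _, hu.prod hv⟩
  rw [frontier_prod_eq]
  exact Or.inr ⟨hpf, frontier_subset_closure hqf⟩

theorem StronglyRegular.fst_of_prod [Nontrivial E] {U : Set E} {V : Set F} (hU : IsOpen U)
    (hUc : IsCompact (closure U)) (hVc : IsCompact (closure V)) {p : E} {q : F}
    (h : StronglyRegular (U ×ˢ V) (p, q)) : StronglyRegular U p := by
  obtain ⟨hfr, w, hw⟩ := stronglyRegular_iff.1 h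
  have hcl := frontier_subset_closure hfr
  rw [closure_prod_eq] at hcl
  exact (hw.slice hUc hVc hcl.2).stronglyRegular hU hcl.1

theorem StronglyRegular.snd_of_prod [Nontrivial F] {U : Set E} {V : Set F} (hV : IsOpen V)
    (hUc : IsCompact (closure U)) (hVc : IsCompact (closure V)) {p : E} {q : F}
    (h : StronglyRegular (U ×ˢ V) (p, q)) : StronglyRegular V q := by
  have hswap : StronglyRegular (V ×ˢ U) (q, p) := by
    have hpre : ContinuousLinearEquiv.prodComm ℂ F E ⁻¹' (U ×ˢ V) = V ×ˢ U :=
      preimage_swap_prod U V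
    simpa only [hpre] using
      h.preimage_continuousLinearEquiv (ContinuousLinearEquiv.prodComm ℂ F E) (x := (q, p))
  exact hswap.fst_of_prod hV hVc hUc

theorem setOf_stronglyRegular_prod [Nontrivial E] [Nontrivial F] {U : Set E} {V : Set F}
    (hU : IsOpen U) (hV : IsOpen V) (hUc : IsCompact (closure U)) (hVc : IsCompact (closure V)) :
    {z : E × F | StronglyRegular (U ×ˢ V) z} =
      {x | StronglyRegular U x} ×ˢ {y | StronglyRegular V y} := by
  ext ⟨p, q⟩
  exact ⟨fun h => ⟨h.fst_of_prod hU hUc hVc, h.snd_of_prod hV hUc hVc⟩,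
    fun h => StronglyRegular.prod h.1 h.2⟩

theorem isClosed_setOf_stronglyRegular_univ_prod_iff [Unique E] (V : Set F) :
    IsClosed {z : E × F | StronglyRegular (univ ×ˢ V) z} ↔
      IsClosed {y | StronglyRegular V y} := by
  let e := ContinuousLinearEquiv.uniqueProd ℂ F E
  have hV : (univ : Set E) ×ˢ V = e ⁻¹' V := by ext; simp [e]
  simp only [hV, stronglyRegular_preimage_continuousLinearEquiv_iff]
  exact e.toHomeomorph.isClosed_preimage (s := {y | StronglyRegular V y})

theorem isClosed_setOf_stronglyRegular_prod_univ_iff [Unique F] (U : Set E) :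
    IsClosed {z : E × F | StronglyRegular (U ×ˢ univ) z} ↔
      IsClosed {x | StronglyRegular U x} := by
  let e := ContinuousLinearEquiv.prodUnique ℂ E F
  have hU : U ×ˢ (univ : Set F) = e ⁻¹' U := by ext; simp [e]
  simp only [hU, stronglyRegular_preimage_continuousLinearEquiv_iff]
  exact e.toHomeomorph.isClosed_preimage (s := {x | StronglyRegular U x})

end StronglyRegular

/-- For `x ≠ x₀` in the closure, `2 re ⟪x₀, x⟫ = ‖x₀‖² + ‖x‖² - ‖x₀ - x‖² < 2 ‖x₀‖²`. -/
theorem isPeakFunction_of_isMaxOn_norm {H : Type*} [NormedAddCommGroup H] [InnerProductSpace ℂ H]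
    {D : Set H} {x₀ : H} (hmax : IsMaxOn (‖·‖) (closure D) x₀) :
    IsPeakFunction D (fun x => (inner ℂ x₀ x).re - ‖x₀‖ ^ 2) x₀ := by
  have hcont : Continuous fun x : H => (inner ℂ x₀ x).re - ‖x₀‖ ^ 2 := by fun_prop
  refine ⟨hcont.continuousOn, ⟨hcont.continuousOn.upperSemicontinuousOn, fun a b => ?_⟩, ?_, ?_⟩
  · have hline : Differentiable ℂ fun t : ℂ =>
        inner ℂ x₀ a - ((‖x₀‖ ^ 2 : ℝ) : ℂ) + t * inner ℂ x₀ b := by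
      fun_prop
    convert subharmonicOn_re_of_differentiable hline {t | a + t • b ∈ D} using 2 with t
    simp only [inner_add_right, inner_smul_right, add_re, sub_re, ofReal_re]
    ring
  · have := inner_self_eq_norm_sq (𝕜 := ℂ) x₀
    simp only [RCLike.re_to_complex] at this
    exact sub_eq_zero.2 this
  · rintro x ⟨hx, hne⟩
    have hle : ‖x‖ ≤ ‖x₀‖ := hmax hx
    have hpos : 0 < ‖x₀ - x‖ := norm_pos_iff.2 (sub_ne_zero.2 (Ne.symm hne))
    have hsq := norm_sub_sq (𝕜 := ℂ) x₀ x
    simp only [RCLike.re_to_complex] at hsq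
    nlinarith [norm_nonneg x]

theorem exists_stronglyRegular_of_isCompact_closure {H : Type*} [NormedAddCommGroup H]
    [InnerProductSpace ℂ H] [Nontrivial H] {D : Set H} (hD : IsOpen D) (hne : D.Nonempty)
    (hDc : IsCompact (closure D)) : ∃ x, StronglyRegular D x := by
  obtain ⟨x₀, hx₀, hmax⟩ := hDc.exists_isMaxOn hne.closure continuous_norm.continuousOn
  exact ⟨x₀, (isPeakFunction_of_isMaxOn_norm hmax).stronglyRegular hD hx₀⟩

theorem exists_stronglyRegular_pi {ι : Type*} [Fintype ι] [Nonempty ι] {D : Set (ι → ℂ)}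
    (hD : IsOpen D) (hne : D.Nonempty) (hDb : Bornology.IsBounded D) :
    ∃ x, StronglyRegular D x := by
  let e := EuclideanSpace.equiv ι ℂ
  have hDc : IsCompact (closure (e ⁻¹' D)) := by
    rw [← e.preimage_closure]
    exact e.toHomeomorph.isCompact_preimage.2 hDb.isCompact_closure
  obtain ⟨x, hx⟩ := exists_stronglyRegular_of_isCompact_closure (hD.preimage e.continuous)
    (hne.preimage e.surjective) hDc
  exact ⟨e x, (stronglyRegular_preimage_continuousLinearEquiv_iff e).1 hx⟩

theorem isClosed_prod_iff_of_nonempty {X Y : Type*} [TopologicalSpace X] [TopologicalSpace Y]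
    {s : Set X} {t : Set Y} (hs : s.Nonempty) (ht : t.Nonempty) :
    IsClosed (s ×ˢ t) ↔ IsClosed s ∧ IsClosed t := by
  refine ⟨fun h => ⟨?_, ?_⟩, fun h => h.1.prod h.2⟩
  · obtain ⟨y, hy⟩ := ht
    simpa [mk_preimage_prod_left hy] using h.preimage (Continuous.prodMk_left y)
  · obtain ⟨x, hx⟩ := hs
    simpa [mk_preimage_prod_right hx] using h.preimage (Continuous.prodMk_right x)

/-- the strongly regular points of `∂(U × V)` form a closed set iff the
strongly regular points of `∂U` and of `∂V` form closed sets.  (Since the sets of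
strongly regular points are contained in the frontiers, which are closed, relative
closedness in the boundary is equivalent to closedness.) -/
theorem stronglyRegular_product_closed_iff
    {n m : ℕ} (U : Set (Fin n → ℂ)) (V : Set (Fin m → ℂ))
    (hUo : IsOpen U) (hUc : IsConnected U) (hUb : Bornology.IsBounded U)
    (hVo : IsOpen V) (hVc : IsConnected V) (hVb : Bornology.IsBounded V) :
    IsClosed {x : (Fin n → ℂ) × (Fin m → ℂ) | StronglyRegular (U ×ˢ V) x} ↔
      IsClosed {z : Fin n → ℂ | StronglyRegular U z} ∧
      IsClosed {w : Fin m → ℂ | StronglyRegular V w} := by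
  rcases isEmpty_or_nonempty (Fin n) with hn | hn
  · obtain rfl : U = univ := Subsingleton.eq_univ_of_nonempty hUc.nonempty
    simpa [not_stronglyRegular_univ] using isClosed_setOf_stronglyRegular_univ_prod_iff V
  rcases isEmpty_or_nonempty (Fin m) with hm | hm
  · obtain rfl : V = univ := Subsingleton.eq_univ_of_nonempty hVc.nonempty
    simpa [not_stronglyRegular_univ] using isClosed_setOf_stronglyRegular_prod_univ_iff U
  rw [setOf_stronglyRegular_prod hUo hVo hUb.isCompact_closure hVb.isCompact_closure]
  exact isClosed_prod_iff_of_nonempty (exists_stronglyRegular_pi hUo hUc.nonempty hUb)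
    (exists_stronglyRegular_pi hVo hVc.nonempty hVb)
end
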